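/- Over the two-letter alphabet {e, e'}, the row-column combination of the Dyck language (matching pair [e,e']) with itself is empty: there is no rectangular array all of whose rows and all of whose columns are nonempty Dyck words over {e, e'}. -/
import Mathlib


/-- Alphabet {e, e'}: `true` is `e`, `false` is `e'`. -/
def cancelStep (w w' : List Bool) : Prop :=
  ∃ (u v : List Bool), w = u ++ [true, false] ++ v ∧ w' = u ++ v

/-- The Dyck language over {e, e'} with matching pair [e, e']. -/
def IsDyck (w : List Bool) : Prop := Relation.ReflTransGen cancelStep w []

/-- Row i (of length n) of a picture. -/
def row (p : ℕ → ℕ → Bool) (n i : ℕ) : List Bool := (List.range n).map (p i)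

/-- Column j (of length m) of a picture. -/
def col (p : ℕ → ℕ → Bool) (m j : ℕ) : List Bool :=
  (List.range m).map (fun i => p i j)

lemma dyck_head {w : List Bool} (h : IsDyck w) :
    ∀ a t, w = a :: t → a = true := by
  induction h using Relation.ReflTransGen.head_induction_on with
  | refl => intro a t h; simp at h
  | head hstep _ ih =>
    intro a t hw
    obtain ⟨u, v, hu, hv⟩ := hstep
    cases u with
    | nil => simp_all
    | cons b u' =>
      subst hu hv
      simp only [List.cons_append, List.cons.injEq] at hw
      exact hw.1 ▸ ih b (u' ++ v) rfl

lemma dyck_last {w : List Bool} (h : IsDyck w) :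
    ∀ a t, w = t ++ [a] → a = false := by
  induction h using Relation.ReflTransGen.head_induction_on with
  | refl => intro a t h; simp at h
  | head hstep _ ih =>
    intro a t hw
    obtain ⟨u, v, hu, hv⟩ := hstep
    rcases List.eq_nil_or_concat v with rfl | ⟨v', b, rfl⟩
    · have : (u ++ [true, false] ++ ([] : List Bool)).getLast? = (t ++ [a]).getLast? := by
        rw [← hu, hw]
      simp at this
      exact this
    · have hb : b = a := by
        have : (u ++ [true, false] ++ (v' ++ [b])).getLast? = (t ++ [a]).getLast? := by
          rw [← List.concat_eq_append, ← hu, hw]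
        simpa [← List.append_assoc] using this
      subst hb
      apply ih b (u ++ v')
      rw [hv, List.concat_eq_append, List.append_assoc]

/-- The row-column combination of the Dyck language over {e, e'} with itself
is empty: no nonempty picture has all rows and all columns Dyck. -/
theorem crossword_dyck_twoLetters_empty (m n : ℕ) (hm : 1 ≤ m) (hn : 1 ≤ n)
    (p : ℕ → ℕ → Bool) :
    ¬ ((∀ i < m, IsDyck (row p n i)) ∧ (∀ j < n, IsDyck (col p m j))) := by
  rintro ⟨hrow, hcol⟩
  obtain ⟨m', rfl⟩ : ∃ m', m = m' + 1 := ⟨m - 1, (Nat.succ_pred_eq_of_pos hm).symm⟩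
  obtain ⟨n', rfl⟩ : ∃ n', n = n' + 1 := ⟨n - 1, (Nat.succ_pred_eq_of_pos hn).symm⟩
  have h1 : p m' 0 = true := by
    apply dyck_head (hrow m' (Nat.lt_succ_self _)) (p m' 0)
      ((List.range n').map (fun k => p m' (k + 1)))
    simp [row, List.range_succ_eq_map, Function.comp]
  have h2 : p m' 0 = false := by
    apply dyck_last (hcol 0 (Nat.succ_pos _)) (p m' 0)
      ((List.range m').map (fun i => p i 0))
    simp [col, List.range_succ]
  rw [h1] at h2
  simp at h2
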